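/- Let R be a commutative k-algebra with a connection ∇ on 𝔇 = Der(R). The kLT(𝔇)-module algebra structure on R determined by the rules: v(E) acts as E, u(E; v(F)) acts as ∇_F E, and subtrees whose root has one child may be replaced by the two-node tree labeled with the derivation they act as, is Leibnitz: for every tree T, every non-root node i with label factored as rE (r ∈ R, E ∈ 𝔇), and every s ∈ R, one has T·s = Σ_{(T_i)} (T_{i(1)}·r)(T(i, E, T_{i(2)})·s), where the coproduct is taken in the subtree T_i rooted at i. -/

import Mathlib

/-- An ordered labeled subtree: a node with a label and an ordered list of children. -/
inductive LSub (D : Type) : Type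
  | mk : D → List (LSub D) → LSub D

/-- An ordered rooted tree with unlabeled root and non-root nodes labeled in `D`,
represented by the list of subtrees attached to the root. -/
abbrev LTree (D : Type) := List (LSub D)

mutual
  /-- Number of nodes of a labeled subtree. -/
  def sizeS {D : Type} : LSub D → Nat
    | .mk _ ts => 1 + sizeL ts
  /-- Total number of (labeled) nodes of a forest. -/
  def sizeL {D : Type} : List (LSub D) → Nat
    | [] => 0
    | t :: ts => sizeS t + sizeL ts
end

mutual
  /-- Graft pending subtrees (given by `f`, indexed by the preorder index of nodes)
  onto a subtree whose own preorder index is `i`; attached subtrees are prepended. -/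
  def graftS {D : Type} (f : Nat → List (LSub D)) (i : Nat) : LSub D → LSub D
    | .mk d ts => .mk d (f i ++ graftL f (i + 1) ts)
  def graftL {D : Type} (f : Nat → List (LSub D)) (i : Nat) : List (LSub D) → List (LSub D)
    | [] => []
    | t :: ts => graftS f i t :: graftL f (i + sizeS t) ts
end

/-- Graft pending subtrees onto a tree; the root has preorder index `0`. -/
def graft {D : Type} (f : Nat → List (LSub D)) (t : LTree D) : LTree D :=
  f 0 ++ graftL f 1 t

/-- All lists of length `m` with entries `< n` (choices of attachment nodes). -/
def choices : Nat → Nat → List (List Nat)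
  | 0, _ => [[]]
  | m + 1, n => (List.range n).flatMap fun c => (choices m n).map (c :: ·)

/-- The Grossman–Larson product of two basis trees, as an element of the free module:
the sum over all ways of attaching the root-subtrees of `T1` to nodes of `T2`. -/
noncomputable def mulT (k : Type) [Semiring k] {D : Type} (T1 T2 : LTree D) :
    LTree D →₀ k :=
  ((choices T1.length (1 + sizeL T2)).map fun c =>
    Finsupp.single
      (graft (fun i => (T1.zip c).filterMap fun p => if p.2 = i then some p.1 else none) T2)
      (1 : k)).sum

/-- `v E`: the two-node tree whose single non-root node is labeled `E`. -/
def vT {D : Type} (E : D) : LTree D := [.mk E []]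

/-- `u(E; T₁,…,T_k)`: root has one child labeled `E`, with which the roots of the `Tᵢ`
are identified. -/
def uT {D : Type} (E : D) (Ts : List (LTree D)) : LTree D := [.mk E Ts.flatten]

/-- `t(T₁,…,T_k)`: identify the roots of the `Tᵢ`. -/
def tT {D : Type} (Ts : List (LTree D)) : LTree D := Ts.flatten

/-- All decompositions of an ordered multiset into a sub-multiset and its complement
(used for the coproduct). -/
def splits {α : Type} : List α → List (List α × List α)
  | [] => [([], [])]
  | a :: l => ((splits l).map fun p => (a :: p.1, p.2)) ++ ((splits l).map fun p => (p.1, a :: p.2))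

/-- The labeled node of `T` at position `(i, p)`: the `i`-th root-subtree, then follow
the path `p` of child indices. -/
def subAtL {D : Type} : List (LSub D) → Nat → List Nat → Option (LSub D)
  | [], _, _ => none
  | t :: _, 0, [] => some t
  | .mk _ cs :: _, 0, j :: p => subAtL cs j p
  | _ :: ts, i + 1, p => subAtL ts i p

/-- Replace the node of `T` at position `(i, p)`: relabel it with `G` and replace the
subtree rooted there (its list of children) by `T'`. -/
def replaceAtL {D : Type} (G : D) (T' : List (LSub D)) :
    List (LSub D) → Nat → List Nat → List (LSub D)
  | [], _, _ => []
  | _ :: ts, 0, [] => .mk G T' :: ts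
  | .mk d cs :: ts, 0, j :: p => .mk d (replaceAtL G T' cs j p) :: ts
  | t :: ts, i + 1, p => t :: replaceAtL G T' ts i p

/-- A `kLT(𝔇)`-module algebra structure on `R` (𝔇 = Der(R)), described via the action
`act` of basis trees: the one-node tree acts as the identity, each tree acts `k`-linearly,
the action is compatible with the tree-attachment product, and satisfies the module
algebra (Hopf) condition with respect to the splitting coproduct. -/
def IsTreeAction (k R : Type) [CommRing k] [CommRing R] [Algebra k R]
    (act : LTree (Derivation k R R) → R → R) : Prop :=
  (∀ f : R, act [] f = f) ∧
  (∀ (T : LTree (Derivation k R R)) (a : k) (f g : R),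
    act T (a • f + g) = a • act T f + act T g) ∧
  (∀ (T₁ T₂ : LTree (Derivation k R R)) (f : R),
    ((mulT k T₁ T₂).sum fun T c => c • act T f) = act T₁ (act T₂ f)) ∧
  (∀ (T : LTree (Derivation k R R)) (f g : R),
    act T (f * g) = ((splits T).map fun q => act q.1 f * act q.2 g).sum)

/-- The `kLT(𝔇)`-module algebra structure `act` is *Leibnitz* if for every tree `T`,
every non-root node (at position `(i, p)`) whose label factors as `r • E`, and every
`s ∈ R`, `T·s = Σ_{(T_i)} (T_{i(1)}·r) (T(i, E, T_{i(2)})·s)`, the coproduct being taken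
in the subtree `T_i` rooted at the node. -/
def IsLeibnitz (k R : Type) [CommRing k] [CommRing R] [Algebra k R]
    (act : LTree (Derivation k R R) → R → R) : Prop :=
  ∀ (T : LTree (Derivation k R R)) (i : Nat) (p : List Nat)
    (D₀ : Derivation k R R) (Ti : List (LSub (Derivation k R R))),
    subAtL T i p = some (LSub.mk D₀ Ti) →
    ∀ (r : R) (E : Derivation k R R), D₀ = r • E →
    ∀ s : R,
      act T s =
        ((splits Ti).map fun q => act q.1 r * act (replaceAtL E q.2 T i p) s).sum

/-- The action `act` is *coherent* if any subtree whose root has a single child and which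
acts on `R` as a derivation `E` may be replaced by the two-node tree `v(E)` without
changing the action of the ambient tree. -/
def IsCoherent (k R : Type) [CommRing k] [CommRing R] [Algebra k R]
    (act : LTree (Derivation k R R) → R → R) : Prop :=
  ∀ (T : LTree (Derivation k R R)) (i : Nat) (p : List Nat)
    (d : Derivation k R R) (cs : List (LSub (Derivation k R R))) (E : Derivation k R R),
    subAtL T i p = some (LSub.mk d cs) →
    (∀ f : R, act [LSub.mk d cs] f = E f) →
    ∀ f : R, act T f = act (replaceAtL E [] T i p) f

/-- A connection on `Der(R)`. -/
def IsConnection (k R : Type) [CommRing k] [CommRing R] [Algebra k R]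
    (c : Derivation k R R → Derivation k R R → Derivation k R R) : Prop :=
  (∀ E₁ E₂ F, c (E₁ + E₂) F = c E₁ F + c E₂ F) ∧
  (∀ E F₁ F₂, c E (F₁ + F₂) = c E F₁ + c E F₂) ∧
  (∀ (f : R) (E F), c (f • E) F = f • c E F) ∧
  (∀ (f : R) (E F), c E (f • F) = f • c E F + (E f) • F)

/-
Since `[c]` is primitive, `act [c]` is a derivation, and the Grossman–Larson product gives
`act (c :: L) = act [c] ∘ act L - Σ_u act u`, the sum running over the forests `u` obtained by
attaching `c` to one node of `L`. Writing `d⟨L⟩` for the subtree with root label `d` and children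
`L`, coherence and `u(E; v(F)) = ∇_F E` give the analogue one level down,
`act [d⟨c :: L⟩] = ∇_{act [c]} act [d⟨L⟩] - Σ_u act [d⟨u⟩]`. Peeling off the first root subtree,
or the first child of a single root subtree, reduces the Leibnitz expansion of `T·s` to that of
trees which are smaller, or of the same size with fewer root subtrees, or with fewer children of
their only root subtree. The expansion passes through both recursions because `act [c]` is a
derivation, `∇` is `R`-linear in its first argument and Leibniz in its second, the attachment
sums re-expand along the coproduct of `T_i`, and the terms in which `c` is attached inside
`T_{i(1)}` recombine with `(c :: T_{i(1)})·r` into `act [c] (T_{i(1)}·r)`.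
-/

namespace List

variable {α β M : Type*} [AddCommMonoid M]

theorem sum_map_sum_comm (l : List α) (l' : List β) (F : α → β → M) :
    (l.map fun x => (l'.map (F x)).sum).sum = (l'.map fun y => (l.map (F · y)).sum).sum := by
  induction l with
  | nil => simp
  | cons x l ih => simp only [map_cons, sum_cons, ih, ← sum_map_add]

theorem sum_map_sum_mul_left {R : Type*} [NonUnitalNonAssocSemiring R] (l : List α)
    (l' : List β) (a : β → R) (G : β → α → R) :
    (l.map fun x => (l'.map fun y => a y * G y x).sum).sum
      = (l'.map fun y => a y * (l.map (G y)).sum).sum := by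
  simp only [sum_map_sum_comm l l', sum_map_mul_left]

end List

section Splits

variable {α : Type} {M : Type*} [AddCommMonoid M]

theorem sum_map_splits_cons (a : α) (l : List α) (f : List α × List α → M) :
    ((splits (a :: l)).map f).sum
      = ((splits l).map fun q => f (a :: q.1, q.2)).sum
        + ((splits l).map fun q => f (q.1, a :: q.2)).sum := by
  simp [splits, Function.comp_def]

def varyOne (V : α → List α) : List α → List (List α)
  | [] => []
  | a :: l => (V a).map (· :: l) ++ (varyOne V l).map (a :: ·)

theorem sum_varyOne_splits (V : α → List α) (l : List α) (f : List α × List α → M) :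
    ((varyOne V l).map fun u => ((splits u).map f).sum).sum
      = ((splits l).map fun q =>
          ((varyOne V q.1).map fun u => f (u, q.2)).sum
            + ((varyOne V q.2).map fun u => f (q.1, u)).sum).sum := by
  induction l generalizing f with
  | nil => simp [varyOne, splits]
  | cons a l ih =>
    simp only [varyOne, List.map_append, List.sum_append, List.map_map, Function.comp_def,
      sum_map_splits_cons, List.sum_map_add, ih, List.sum_map_sum_comm (V a) (splits l)]
    abel

end Splits

section Trees

variable {D : Type}

@[simp] theorem sizeS_mk (d : D) (cs : List (LSub D)) : sizeS (.mk d cs) = 1 + sizeL cs := by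
  rw [sizeS]

@[simp] theorem sizeL_nil : sizeL ([] : List (LSub D)) = 0 := by rw [sizeL]

@[simp] theorem sizeL_cons (t : LSub D) (ts : List (LSub D)) :
    sizeL (t :: ts) = sizeS t + sizeL ts := by
  rw [sizeL]

theorem sizeS_pos : ∀ t : LSub D, 0 < sizeS t
  | .mk _ _ => by simp

mutual
  def attachS (c : LSub D) : LSub D → List (LSub D)
    | .mk d cs => .mk d (c :: cs) :: (attachL c cs).map (.mk d ·)
  def attachL (c : LSub D) : List (LSub D) → List (List (LSub D))
    | [] => []
    | t :: ts => (attachS c t).map (· :: ts) ++ (attachL c ts).map (t :: ·)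
end

@[simp] theorem attachL_nil (c : LSub D) : attachL c [] = [] := by rw [attachL]

theorem attachL_eq_varyOne (c : LSub D) :
    ∀ l : List (LSub D), attachL c l = varyOne (attachS c) l
  | [] => by rw [attachL, varyOne]
  | t :: ts => by rw [attachL, varyOne, attachL_eq_varyOne c ts]

theorem sum_map_attachL_cons {M : Type*} [AddCommMonoid M] (c : LSub D) (d : D)
    (cs L : List (LSub D)) (F : List (LSub D) → M) :
    ((attachL c (.mk d cs :: L)).map F).sum
      = F (.mk d (c :: cs) :: L) + ((attachL c cs).map fun u => F (.mk d u :: L)).sum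
        + ((attachL c L).map fun u => F (.mk d cs :: u)).sum := by
  simp [attachL, attachS, Function.comp_def, add_assoc]

theorem mem_attachL_cons_head (c : LSub D) (d : D) (cs L : List (LSub D)) :
    .mk d (c :: cs) :: L ∈ attachL c (.mk d cs :: L) := by
  simp [attachL, attachS]

theorem mem_attachL_cons_children (c : LSub D) (d : D) {cs : List (LSub D)} (L : List (LSub D))
    {u : List (LSub D)} (hu : u ∈ attachL c cs) : .mk d u :: L ∈ attachL c (.mk d cs :: L) := by
  simp [attachL, attachS, hu]

theorem mem_attachL_cons_tail (c t : LSub D) {L u : List (LSub D)} (hu : u ∈ attachL c L) :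
    t :: u ∈ attachL c (t :: L) := by
  simp [attachL, hu]

mutual
  theorem sizeS_of_mem_attachS (c : LSub D) :
      ∀ (t : LSub D), ∀ u ∈ attachS c t, sizeS u = sizeS c + sizeS t
    | .mk d cs, u, hu => by
      simp only [attachS, List.mem_cons, List.mem_map] at hu
      rcases hu with rfl | ⟨u', hu', rfl⟩
      · simp only [sizeS_mk, sizeL_cons]; ring
      · simp only [sizeS_mk, sizeL_of_mem_attachL c cs u' hu']; ring
  theorem sizeL_of_mem_attachL (c : LSub D) :
      ∀ (ts : List (LSub D)), ∀ u ∈ attachL c ts, sizeL u = sizeS c + sizeL ts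
    | [], u, hu => by simp at hu
    | t :: ts, u, hu => by
      simp only [attachL, List.mem_append, List.mem_map] at hu
      rcases hu with ⟨u', hu', rfl⟩ | ⟨u', hu', rfl⟩
      · simp only [sizeL_cons, sizeS_of_mem_attachS c t u' hu']; ring
      · simp only [sizeL_cons, sizeL_of_mem_attachL c ts u' hu']; ring
end

theorem length_of_mem_attachL (c : LSub D) :
    ∀ (ts : List (LSub D)), ∀ u ∈ attachL c ts, u.length = ts.length
  | [], u, hu => by simp at hu
  | t :: ts, u, hu => by
    simp only [attachL, List.mem_append, List.mem_map] at hu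
    rcases hu with ⟨u', _, rfl⟩ | ⟨u', hu', rfl⟩
    · simp
    · simp [length_of_mem_attachL c ts u' hu']

end Trees

section Graft

variable {D : Type}

def pendingAt (j : ℕ) (c : LSub D) (i : ℕ) : List (LSub D) := if j = i then [c] else []

mutual
  theorem graftS_pendingAt_eq_self (c : LSub D) :
      ∀ (t : LSub D) (base j : ℕ), j < base ∨ base + sizeS t ≤ j →
        graftS (pendingAt j c) base t = t
    | .mk d cs, base, j, h => by
      simp only [sizeS_mk] at h
      rw [graftS, graftL_pendingAt_eq_self c cs (base + 1) j (by omega), pendingAt,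
        if_neg (by omega), List.nil_append]
  theorem graftL_pendingAt_eq_self (c : LSub D) :
      ∀ (ts : List (LSub D)) (base j : ℕ), j < base ∨ base + sizeL ts ≤ j →
        graftL (pendingAt j c) base ts = ts
    | [], _, _, _ => by rw [graftL]
    | t :: ts, base, j, h => by
      have := sizeS_pos t
      simp only [sizeL_cons] at h
      rw [graftL, graftS_pendingAt_eq_self c t base j (by omega),
        graftL_pendingAt_eq_self c ts (base + sizeS t) j (by omega)]
end

mutual
  theorem map_range_graftS_pendingAt (c : LSub D) : ∀ (t : LSub D) (base : ℕ),
      (List.range (sizeS t)).map (fun o => graftS (pendingAt (base + o) c) base t) = attachS c t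
    | .mk d cs, base => by
      rw [sizeS_mk, Nat.add_comm, List.range_succ_eq_map, List.map_cons, List.map_map, attachS,
        ← map_range_graftL_pendingAt c cs (base + 1), List.map_map]
      congr 1
      · simp [graftS, graftL_pendingAt_eq_self c cs (base + 1) base (by omega), pendingAt]
      · refine List.map_congr_left fun o _ => ?_
        simp only [Function.comp_apply, graftS, pendingAt, Nat.succ_eq_add_one,
          show base + (o + 1) = base + 1 + o by omega]
        rw [if_neg (by omega), List.nil_append]
  theorem map_range_graftL_pendingAt (c : LSub D) : ∀ (ts : List (LSub D)) (base : ℕ),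
      (List.range (sizeL ts)).map (fun o => graftL (pendingAt (base + o) c) base ts)
        = attachL c ts
    | [], _ => by rw [sizeL_nil, attachL_nil]; rfl
    | t :: ts, base => by
      rw [sizeL_cons, List.range_add, List.map_append, List.map_map, attachL,
        ← map_range_graftS_pendingAt c t base,
        ← map_range_graftL_pendingAt c ts (base + sizeS t), List.map_map, List.map_map]
      congr 1
      · refine List.map_congr_left fun o ho => ?_
        rw [List.mem_range] at ho
        simp only [Function.comp_apply, graftL,
          graftL_pendingAt_eq_self c ts (base + sizeS t) (base + o) (by omega)]
      · refine List.map_congr_left fun o _ => ?_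
        simp only [Function.comp_apply, graftL,
          show base + (sizeS t + o) = base + sizeS t + o by omega]
        rw [graftS_pendingAt_eq_self c t base _ (by omega)]
end

theorem map_range_graft_pendingAt (c : LSub D) (ts : List (LSub D)) :
    (List.range (1 + sizeL ts)).map (fun j => graft (pendingAt j c) ts)
      = (c :: ts) :: attachL c ts := by
  rw [Nat.add_comm, List.range_succ_eq_map, List.map_cons, List.map_map,
    ← map_range_graftL_pendingAt c ts 1]
  congr 1
  · rw [graft, graftL_pendingAt_eq_self c ts 1 0 (by omega), pendingAt, if_pos rfl,
      List.singleton_append]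
  · refine List.map_congr_left fun o _ => ?_
    simp only [Function.comp_apply, graft, pendingAt, if_neg (show o + 1 ≠ 0 by omega),
      List.nil_append, Nat.add_comm 1 o]

theorem mulT_singleton (k : Type) [Semiring k] (c : LSub D) (ts : List (LSub D)) :
    mulT k [c] ts = (((c :: ts) :: attachL c ts).map fun u => Finsupp.single u (1 : k)).sum := by
  have hchoices : choices 1 (1 + sizeL ts) = (List.range (1 + sizeL ts)).map ([·]) := by
    simp only [choices, List.flatMap, List.map_cons, List.map_nil]
    induction List.range (1 + sizeL ts) <;> simp_all
  rw [mulT, List.length_singleton, hchoices, ← map_range_graft_pendingAt, List.map_map,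
    List.map_map]
  congr 2
  funext j
  simp only [Function.comp_apply, List.zip_cons_cons, List.zip_nil_left]
  congr 2
  funext i
  by_cases h : j = i <;> simp [pendingAt, h]

end Graft

section Positions

variable {D : Type}

def subAtS : LSub D → List ℕ → Option (LSub D)
  | t, [] => some t
  | .mk _ cs, j :: p => subAtL cs j p

def replaceAtS (G : D) (T' : List (LSub D)) : LSub D → List ℕ → LSub D
  | _, [] => .mk G T'
  | .mk d cs, j :: p => .mk d (replaceAtL G T' cs j p)

@[simp] theorem subAtL_nil (i : ℕ) (p : List ℕ) : subAtL ([] : List (LSub D)) i p = none := by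
  rw [subAtL]

@[simp] theorem subAtL_cons_zero (t : LSub D) (ts : List (LSub D)) (p : List ℕ) :
    subAtL (t :: ts) 0 p = subAtS t p := by
  cases t; cases p <;> simp [subAtL, subAtS]

@[simp] theorem subAtL_cons_succ (t : LSub D) (ts : List (LSub D)) (i : ℕ) (p : List ℕ) :
    subAtL (t :: ts) (i + 1) p = subAtL ts i p := by
  cases t; cases p <;> simp [subAtL]

@[simp] theorem subAtS_nil (t : LSub D) : subAtS t [] = some t := by
  cases t; rfl

@[simp] theorem subAtS_mk_cons (d : D) (cs : List (LSub D)) (j : ℕ) (p : List ℕ) :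
    subAtS (.mk d cs) (j :: p) = subAtL cs j p := rfl

@[simp] theorem replaceAtL_cons_zero (G : D) (T' : List (LSub D)) (t : LSub D)
    (ts : List (LSub D)) (p : List ℕ) :
    replaceAtL G T' (t :: ts) 0 p = replaceAtS G T' t p :: ts := by
  cases t; cases p <;> simp [replaceAtL, replaceAtS]

@[simp] theorem replaceAtL_cons_succ (G : D) (T' : List (LSub D)) (t : LSub D)
    (ts : List (LSub D)) (i : ℕ) (p : List ℕ) :
    replaceAtL G T' (t :: ts) (i + 1) p = t :: replaceAtL G T' ts i p := by
  cases t; cases p <;> simp [replaceAtL]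

@[simp] theorem replaceAtS_nil (G : D) (T' : List (LSub D)) (t : LSub D) :
    replaceAtS G T' t [] = .mk G T' := by
  cases t; rfl

@[simp] theorem replaceAtS_mk_cons (G : D) (T' : List (LSub D)) (d : D) (cs : List (LSub D))
    (j : ℕ) (p : List ℕ) :
    replaceAtS G T' (.mk d cs) (j :: p) = .mk d (replaceAtL G T' cs j p) := rfl

end Positions

section Expansion

variable {D : Type} {R : Type*} [CommSemiring R]

def IsLeibnitzAt (a F : List (LSub D) → R) (d E : D) (X : List (LSub D)) : Prop :=
  ∀ i p Ti, subAtL X i p = some (.mk d Ti) →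
    F X = ((splits Ti).map fun q => a q.1 * F (replaceAtL E q.2 X i p)).sum

variable {a F : List (LSub D) → R} {d E : D}

theorem IsLeibnitzAt.tail {t : LSub D} {X : List (LSub D)}
    (h : IsLeibnitzAt a F d E (t :: X)) : IsLeibnitzAt a (fun Y => F (t :: Y)) d E X :=
  fun i p Ti hsub => by simpa using h (i + 1) p Ti (by simpa using hsub)

theorem IsLeibnitzAt.children {d' : D} {Y L : List (LSub D)}
    (h : IsLeibnitzAt a F d E (.mk d' Y :: L)) :
    IsLeibnitzAt a (fun Y => F (.mk d' Y :: L)) d E Y :=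
  fun j p Ti hsub => by simpa using h 0 (j :: p) Ti (by simpa using hsub)

theorem sum_attachL_expand_children (c : LSub D) (Ti : List (LSub D))
    (F' : List (LSub D) → R) (G : List (LSub D) → R)
    (h : ∀ u ∈ attachL c Ti, F' u = ((splits u).map fun q => a q.1 * G q.2).sum) :
    ((attachL c Ti).map F').sum
      = ((splits Ti).map fun q => ((attachL c q.1).map a).sum * G q.2
          + a q.1 * ((attachL c q.2).map G).sum).sum := by
  rw [List.map_congr_left h, attachL_eq_varyOne, sum_varyOne_splits]
  simp only [← attachL_eq_varyOne, List.sum_map_mul_left, List.sum_map_mul_right]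

theorem sum_attachL_expand_of_subAtL (c : LSub D) :
    ∀ (L : List (LSub D)) (F : List (LSub D) → R) (i : ℕ) (p : List ℕ) (Ti : List (LSub D)),
      subAtL L i p = some (.mk d Ti) → (∀ u ∈ attachL c L, IsLeibnitzAt a F d E u) →
      ((attachL c L).map F).sum
        = ((splits Ti).map fun q =>
            (a (c :: q.1) + ((attachL c q.1).map a).sum) * F (replaceAtL E q.2 L i p)
              + a q.1 * ((attachL c (replaceAtL E q.2 L i p)).map F).sum).sum
  | [], _, _, _, _, hsub, _ => by simp at hsub
  | .mk d0 cs :: L, F, i + 1, p, Ti, hsub, hF => by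
    rw [subAtL_cons_succ] at hsub
    have hhead := (hF _ (mem_attachL_cons_head c d0 cs L)).tail i p Ti hsub
    have hmid : ((attachL c cs).map fun u => F (.mk d0 u :: L)).sum
        = ((splits Ti).map fun q => a q.1 *
            ((attachL c cs).map fun u => F (.mk d0 u :: replaceAtL E q.2 L i p)).sum).sum := by
      rw [List.map_congr_left fun u hu =>
        (hF _ (mem_attachL_cons_children c d0 L hu)).tail i p Ti hsub,
        List.sum_map_sum_mul_left]
    have hlast := sum_attachL_expand_of_subAtL c L (fun u => F (.mk d0 cs :: u)) i p Ti hsub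
      fun u hu => (hF _ (mem_attachL_cons_tail c _ hu)).tail
    simp only [sum_map_attachL_cons, replaceAtL_cons_succ] at hhead hlast ⊢
    rw [hhead, hmid, hlast, ← List.sum_map_add, ← List.sum_map_add]
    refine congrArg List.sum (List.map_congr_left fun q _ => ?_)
    ring
  | .mk d0 cs :: L, F, 0, j :: p, Ti, hsub, hF => by
    rw [subAtL_cons_zero, subAtS_mk_cons] at hsub
    have hhead := (hF _ (mem_attachL_cons_head c d0 cs L)).children.tail j p Ti hsub
    have hmid := sum_attachL_expand_of_subAtL c cs (fun u => F (.mk d0 u :: L)) j p Ti hsub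
      fun u hu => (hF _ (mem_attachL_cons_children c d0 L hu)).children
    have hlast : ((attachL c L).map fun u => F (.mk d0 cs :: u)).sum
        = ((splits Ti).map fun q => a q.1 *
            ((attachL c L).map fun u => F (.mk d0 (replaceAtL E q.2 cs j p) :: u)).sum).sum := by
      rw [List.map_congr_left fun u hu =>
        (hF _ (mem_attachL_cons_tail c _ hu)).children j p Ti hsub, List.sum_map_sum_mul_left]
    simp only [sum_map_attachL_cons, replaceAtL_cons_zero, replaceAtS_mk_cons] at hhead hmid ⊢
    rw [hhead, hmid, hlast, ← List.sum_map_add, ← List.sum_map_add]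
    refine congrArg List.sum (List.map_congr_left fun q _ => ?_)
    ring
  | .mk d0 cs :: L, F, 0, [], Ti, hsub, hF => by
    obtain ⟨rfl, rfl⟩ : d0 = d ∧ cs = Ti := by simpa using hsub
    have hhead := hF _ (mem_attachL_cons_head c d0 cs L) 0 [] (c :: cs) (by simp)
    have hmid := sum_attachL_expand_children c cs (fun u => F (.mk d0 u :: L))
      (fun v => F (.mk E v :: L)) fun u hu => by
        simpa using hF _ (mem_attachL_cons_children c d0 L hu) 0 [] u (by simp)
    have hlast : ((attachL c L).map fun u => F (.mk d0 cs :: u)).sum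
        = ((splits cs).map fun q => a q.1 *
            ((attachL c L).map fun u => F (.mk E q.2 :: u)).sum).sum := by
      rw [List.map_congr_left fun u hu => by
          simpa using hF _ (mem_attachL_cons_tail c _ hu) 0 [] cs (by simp),
        List.sum_map_sum_mul_left]
    simp only [sum_map_attachL_cons, replaceAtL_cons_zero, replaceAtS_nil, sum_map_splits_cons]
      at hhead ⊢
    rw [hhead, hmid, hlast, ← List.sum_map_add, ← List.sum_map_add, ← List.sum_map_add]
    refine congrArg List.sum (List.map_congr_left fun q _ => ?_)
    ring

theorem sum_attachL_expand_of_subAtS (c : LSub D) (p : List ℕ) (Ti : List (LSub D))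
    (hc : subAtS c p = some (.mk d Ti)) :
    ∀ (L : List (LSub D)) (F : List (LSub D) → R),
      (∀ u ∈ attachL c L, IsLeibnitzAt a F d E u) →
      ((attachL c L).map F).sum
        = ((splits Ti).map fun q => a q.1 * ((attachL (replaceAtS E q.2 c p) L).map F).sum).sum
  | [], _, _ => by simp
  | .mk d0 cs :: L, F, hF => by
    have hhead := hF _ (mem_attachL_cons_head c d0 cs L) 0 (0 :: p) Ti (by simpa using hc)
    have hmid := sum_attachL_expand_of_subAtS c p Ti hc cs (fun u => F (.mk d0 u :: L))
      fun u hu => (hF _ (mem_attachL_cons_children c d0 L hu)).children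
    have hlast := sum_attachL_expand_of_subAtS c p Ti hc L (fun u => F (.mk d0 cs :: u))
      fun u hu => (hF _ (mem_attachL_cons_tail c _ hu)).tail
    simp only [sum_map_attachL_cons, hhead, hmid, hlast, ← List.sum_map_add, mul_add]
    simp

end Expansion

namespace Derivation

variable {R A M : Type*} [CommSemiring R] [CommSemiring A] [Algebra R A] {ι : Type*}

theorem list_sum_apply [AddCommMonoid M] [Module A M] [Module R M] (l : List ι)
    (D : ι → Derivation R A M) (x : A) : (l.map D).sum x = (l.map (D · x)).sum := by
  induction l <;> simp_all

theorem map_list_sum_mul (D : Derivation R A A) (l : List ι) (a b : ι → A) :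
    D (l.map fun q => a q * b q).sum = (l.map fun q => D (a q) * b q + a q * D (b q)).sum := by
  rw [map_list_sum, List.map_map]
  refine congrArg List.sum (List.map_congr_left fun q _ => ?_)
  simp only [Function.comp_apply, Derivation.leibniz, smul_eq_mul]
  ring

end Derivation

section Action

variable {k R : Type} [CommRing k] [CommRing R] [Algebra k R]
  {act : LTree (Derivation k R R) → R → R}

namespace IsTreeAction

theorem act_add (hact : IsTreeAction k R act) (T : LTree (Derivation k R R)) (f g : R) :
    act T (f + g) = act T f + act T g := by
  simpa using hact.2.1 T 1 f g

theorem act_smul (hact : IsTreeAction k R act) (T : LTree (Derivation k R R)) (a : k) (f : R) :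
    act T (a • f) = a • act T f := by
  have h0 : act T 0 = 0 := by simpa using hact.act_add T 0 0
  simpa [h0] using hact.2.1 T a f 0

theorem act_singleton_mul (hact : IsTreeAction k R act) (t : LSub (Derivation k R R))
    (f g : R) : act [t] (f * g) = f * act [t] g + g * act [t] f := by
  rw [hact.2.2.2]
  simp [splits, hact.1, add_comm, mul_comm]

def derivation (hact : IsTreeAction k R act) (t : LSub (Derivation k R R)) :
    Derivation k R R :=
  Derivation.mk' ⟨⟨act [t], hact.act_add [t]⟩, hact.act_smul [t]⟩ fun f g => by
    simpa using hact.act_singleton_mul t f g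

@[simp] theorem derivation_apply (hact : IsTreeAction k R act) (t : LSub (Derivation k R R))
    (f : R) : hact.derivation t f = act [t] f := rfl

theorem act_cons_add_sum_attachL (hact : IsTreeAction k R act) (c : LSub (Derivation k R R))
    (L : LTree (Derivation k R R)) (f : R) :
    act (c :: L) f + ((attachL c L).map (act · f)).sum = act [c] (act L f) := by
  have h := hact.2.2.1 [c] L f
  rw [mulT_singleton, ← Finsupp.linearCombination_apply, map_list_sum, List.map_map] at h
  simpa [Function.comp_def, Finsupp.linearCombination_single] using h

theorem derivation_eq_sum (hact : IsTreeAction k R act) {ι : Type}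
    {t : LSub (Derivation k R R)} {l : List ι} {a : ι → R} {ts : ι → LSub (Derivation k R R)}
    (h : ∀ x, act [t] x = (l.map fun q => a q * act [ts q] x).sum) :
    hact.derivation t = (l.map fun q => a q • hact.derivation (ts q)).sum := by
  ext x
  simp [h, Derivation.list_sum_apply]

end IsTreeAction

namespace IsConnection

variable {c : Derivation k R R → Derivation k R R → Derivation k R R}

theorem sum_smul_left (hc : IsConnection k R c) {ι : Type} (l : List ι) (a : ι → R)
    (G : ι → Derivation k R R) (H : Derivation k R R) :
    c (l.map fun q => a q • G q).sum H = (l.map fun q => a q • c (G q) H).sum := by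
  induction l with
  | nil => simpa using hc.1 0 0 H
  | cons q l ih => simp [hc.1, hc.2.2.1, ih]

theorem sum_smul_right (hc : IsConnection k R c) {ι : Type} (l : List ι) (a : ι → R)
    (F : Derivation k R R) (G : ι → Derivation k R R) :
    c F (l.map fun q => a q • G q).sum
      = (l.map fun q => a q • c F (G q) + F (a q) • G q).sum := by
  induction l with
  | nil => simpa using hc.2.1 F 0 0
  | cons q l ih => simp [hc.2.1, hc.2.2.2, ih]

end IsConnection

namespace IsCoherent

variable {c : Derivation k R R → Derivation k R R → Derivation k R R}

theorem act_pair (hcoh : IsCoherent k R act) (hact : IsTreeAction k R act)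
    (c₀ t : LSub (Derivation k R R)) (f : R) :
    act [c₀, t] f = act [c₀, .mk (hact.derivation t) []] f := by
  obtain ⟨d, cs⟩ := t
  simpa using hcoh [c₀, .mk d cs] 1 [] d cs (hact.derivation _) (by simp) (fun _ => rfl) f

theorem act_mk_singleton (hcoh : IsCoherent k R act) (hact : IsTreeAction k R act)
    (hu : ∀ (E F : Derivation k R R) (f : R), act (uT E [vT F]) f = (c F E) f)
    (G : Derivation k R R) (t : LSub (Derivation k R R)) (f : R) :
    act [.mk G [t]] f = c (hact.derivation t) G f := by
  obtain ⟨d, cs⟩ := t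
  rw [hcoh [.mk G [.mk d cs]] 0 [0] d cs (hact.derivation _) (by simp) (fun _ => rfl) f]
  simpa [uT, vT] using hu G (hact.derivation _) f

theorem act_mk_cons_add_sum_attachL (hcoh : IsCoherent k R act) (hact : IsTreeAction k R act)
    (hv : ∀ (E : Derivation k R R) (f : R), act (vT E) f = E f)
    (hu : ∀ (E F : Derivation k R R) (f : R), act (uT E [vT F]) f = (c F E) f)
    (d : Derivation k R R) (c₀ : LSub (Derivation k R R)) (L : LTree (Derivation k R R))
    (s : R) :
    act [.mk d (c₀ :: L)] s + ((attachL c₀ L).map fun u => act [.mk d u] s).sum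
      = c (hact.derivation c₀) (hact.derivation (.mk d L)) s := by
  set G := hact.derivation (.mk d L)
  have hpeel := hact.act_cons_add_sum_attachL c₀ [.mk d L] s
  have hpeel' := hact.act_cons_add_sum_attachL c₀ [.mk G []] s
  simp only [sum_map_attachL_cons, attachL_nil, List.map_nil, List.sum_nil, add_zero]
    at hpeel hpeel'
  rw [show act [.mk G []] s = act [.mk d L] s from hv G s, hcoh.act_mk_singleton hact hu]
    at hpeel'
  rw [hcoh.act_pair hact] at hpeel
  linear_combination hpeel - hpeel'

end IsCoherent

def IsLeibnitzTree (act : LTree (Derivation k R R) → R → R) (r : R) (E : Derivation k R R)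
    (T : LTree (Derivation k R R)) : Prop :=
  ∀ s, IsLeibnitzAt (act · r) (act · s) (r • E) E T

section Peeling

variable {c : Derivation k R R → Derivation k R R → Derivation k R R} {r : R}
  {E : Derivation k R R} {Ti : LTree (Derivation k R R)} {p : List ℕ}

theorem act_cons_expand_of_subAtL (hact : IsTreeAction k R act) {t : LSub (Derivation k R R)}
    {L : LTree (Derivation k R R)} {i : ℕ} (hL : IsLeibnitzTree act r E L)
    (hatt : ∀ u ∈ attachL t L, IsLeibnitzTree act r E u)
    (hsub : subAtL L i p = some (.mk (r • E) Ti)) (s : R) :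
    act (t :: L) s
      = ((splits Ti).map fun q => act q.1 r * act (t :: replaceAtL E q.2 L i p) s).sum := by
  have hpeel := hact.act_cons_add_sum_attachL t
  have hattachL := sum_attachL_expand_of_subAtL t L (act · s) i p Ti hsub fun u hu => hatt u hu s
  have hexp := hL s i p Ti hsub
  dsimp only at hexp
  apply add_right_cancel (b := ((attachL t L).map (act · s)).sum)
  rw [hpeel, hexp, ← hact.derivation_apply, Derivation.map_list_sum_mul, hattachL,
    ← List.sum_map_add]
  refine congrArg List.sum (List.map_congr_left fun q _ => ?_)
  simp only [hact.derivation_apply, ← hpeel q.1 r, ← hpeel (replaceAtL E q.2 L i p) s]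
  ring

theorem act_cons_expand_of_subAtS (hact : IsTreeAction k R act) {t : LSub (Derivation k R R)}
    {L : LTree (Derivation k R R)} (ht : IsLeibnitzTree act r E [t])
    (hatt : ∀ u ∈ attachL t L, IsLeibnitzTree act r E u)
    (hsub : subAtS t p = some (.mk (r • E) Ti)) (s : R) :
    act (t :: L) s
      = ((splits Ti).map fun q => act q.1 r * act (replaceAtS E q.2 t p :: L) s).sum := by
  have hpeel := hact.act_cons_add_sum_attachL
  have ht' : ∀ x, act [t] x
      = ((splits Ti).map fun q => act q.1 r * act [replaceAtS E q.2 t p] x).sum := fun x => by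
    simpa using ht x 0 p Ti (by simpa using hsub)
  have hattachL := sum_attachL_expand_of_subAtS t p Ti hsub L (act · s) fun u hu => hatt u hu s
  apply add_right_cancel (b := ((attachL t L).map (act · s)).sum)
  rw [hpeel, ht', hattachL, ← List.sum_map_add]
  refine congrArg List.sum (List.map_congr_left fun q _ => ?_)
  rw [← mul_add, hpeel]

theorem act_mk_smul_nil (hact : IsTreeAction k R act)
    (hv : ∀ (E : Derivation k R R) (f : R), act (vT E) f = E f) (s : R) :
    act [.mk (r • E) []] s = ((splits []).map fun q => act q.1 r * act [.mk E q.2] s).sum := by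
  simp [splits, hact.1, show ∀ G, act [.mk G []] s = G s from (hv · s)]

theorem act_mk_smul_cons_expand (hc : IsConnection k R c) (hcoh : IsCoherent k R act)
    (hact : IsTreeAction k R act) (hv : ∀ (E : Derivation k R R) (f : R), act (vT E) f = E f)
    (hu : ∀ (E F : Derivation k R R) (f : R), act (uT E [vT F]) f = (c F E) f)
    {cH : LSub (Derivation k R R)} {cL : LTree (Derivation k R R)}
    (hcL : IsLeibnitzTree act r E [.mk (r • E) cL])
    (hatt : ∀ u ∈ attachL cH cL, IsLeibnitzTree act r E [.mk (r • E) u]) (s : R) :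
    act [.mk (r • E) (cH :: cL)] s
      = ((splits (cH :: cL)).map fun q => act q.1 r * act [.mk E q.2] s).sum := by
  have hnabla := hcoh.act_mk_cons_add_sum_attachL hact hv hu
  have hder := hact.derivation_eq_sum fun x => by simpa using hcL x 0 [] cL (by simp)
  have hattachL := sum_attachL_expand_children (a := (act · r)) cH cL
    (fun u => act [.mk (r • E) u] s) (fun v => act [.mk E v] s) fun u hu => by
      simpa using hatt u hu s 0 [] u (by simp)
  apply add_right_cancel (b := ((attachL cH cL).map fun u => act [.mk (r • E) u] s).sum)
  rw [hnabla, hder, hc.sum_smul_right, Derivation.list_sum_apply, sum_map_splits_cons, hattachL,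
    ← List.sum_map_add, ← List.sum_map_add]
  refine congrArg List.sum (List.map_congr_left fun q _ => ?_)
  have hpeel := hact.act_cons_add_sum_attachL cH q.1 r
  have hnablaq := hnabla E cH q.2 s
  simp only [Derivation.add_apply, Derivation.smul_apply, smul_eq_mul, hact.derivation_apply]
    at hnablaq ⊢
  linear_combination -act [.mk E q.2] s * hpeel - act q.1 r * hnablaq

theorem act_mk_cons_expand_of_subAtL (hc : IsConnection k R c) (hcoh : IsCoherent k R act)
    (hact : IsTreeAction k R act) (hv : ∀ (E : Derivation k R R) (f : R), act (vT E) f = E f)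
    (hu : ∀ (E F : Derivation k R R) (f : R), act (uT E [vT F]) f = (c F E) f)
    {d : Derivation k R R} {cH : LSub (Derivation k R R)} {cL : LTree (Derivation k R R)}
    {j : ℕ} (hcL : IsLeibnitzTree act r E [.mk d cL])
    (hatt : ∀ u ∈ attachL cH cL, IsLeibnitzTree act r E [.mk d u])
    (hsub : subAtL cL j p = some (.mk (r • E) Ti)) (s : R) :
    act [.mk d (cH :: cL)] s
      = ((splits Ti).map fun q =>
          act q.1 r * act [.mk d (cH :: replaceAtL E q.2 cL j p)] s).sum := by
  have hnabla := hcoh.act_mk_cons_add_sum_attachL hact hv hu d cH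
  have hder := hact.derivation_eq_sum fun x => by
    simpa using hcL x 0 (j :: p) Ti (by simpa using hsub)
  have hattachL := sum_attachL_expand_of_subAtL cH cL (fun v => act [.mk d v] s) j p Ti hsub
    fun u hu => (hatt u hu s).children
  apply add_right_cancel (b := ((attachL cH cL).map fun u => act [.mk d u] s).sum)
  rw [hnabla, hder, hc.sum_smul_right, Derivation.list_sum_apply, hattachL, ← List.sum_map_add]
  refine congrArg List.sum (List.map_congr_left fun q _ => ?_)
  have hpeel := hact.act_cons_add_sum_attachL cH q.1 r
  have hnablaq := hnabla (replaceAtL E q.2 cL j p) s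
  simp only [Derivation.add_apply, Derivation.smul_apply, smul_eq_mul, hact.derivation_apply]
    at hnablaq ⊢
  linear_combination -act [.mk d (replaceAtL E q.2 cL j p)] s * hpeel - act q.1 r * hnablaq

theorem act_mk_cons_expand_of_subAtS (hc : IsConnection k R c) (hcoh : IsCoherent k R act)
    (hact : IsTreeAction k R act) (hv : ∀ (E : Derivation k R R) (f : R), act (vT E) f = E f)
    (hu : ∀ (E F : Derivation k R R) (f : R), act (uT E [vT F]) f = (c F E) f)
    {d : Derivation k R R} {cH : LSub (Derivation k R R)} {cL : LTree (Derivation k R R)}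
    (hcH : IsLeibnitzTree act r E [cH])
    (hatt : ∀ u ∈ attachL cH cL, IsLeibnitzTree act r E [.mk d u])
    (hsub : subAtS cH p = some (.mk (r • E) Ti)) (s : R) :
    act [.mk d (cH :: cL)] s
      = ((splits Ti).map fun q =>
          act q.1 r * act [.mk d (replaceAtS E q.2 cH p :: cL)] s).sum := by
  have hnabla := hcoh.act_mk_cons_add_sum_attachL hact hv hu d
  have hder := hact.derivation_eq_sum fun x => by simpa using hcH x 0 p Ti (by simpa using hsub)
  have hattachL := sum_attachL_expand_of_subAtS cH p Ti hsub cL (fun v => act [.mk d v] s)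
    fun u hu => (hatt u hu s).children
  apply add_right_cancel (b := ((attachL cH cL).map fun u => act [.mk d u] s).sum)
  rw [hnabla, hder, hc.sum_smul_left, Derivation.list_sum_apply, hattachL, ← List.sum_map_add]
  refine congrArg List.sum (List.map_congr_left fun q _ => ?_)
  rw [← mul_add, hnabla, Derivation.smul_apply, smul_eq_mul]

end Peeling

def rootArity {D : Type} : List (LSub D) → ℕ
  | [] => 0
  | .mk _ cs :: _ => cs.length

theorem isLeibnitzTree {c : Derivation k R R → Derivation k R R → Derivation k R R}
    (hc : IsConnection k R c) (hcoh : IsCoherent k R act) (hact : IsTreeAction k R act)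
    (hv : ∀ (E : Derivation k R R) (f : R), act (vT E) f = E f)
    (hu : ∀ (E F : Derivation k R R) (f : R), act (uT E [vT F]) f = (c F E) f)
    (r : R) (E : Derivation k R R) (T : LTree (Derivation k R R)) :
    IsLeibnitzTree act r E T := by
  intro s i p Ti hsub
  match T, i, p, hsub with
  | [], _, _, hsub => simp at hsub
  | t :: L, i + 1, p, hsub =>
    simpa using act_cons_expand_of_subAtL hact (isLeibnitzTree hc hcoh hact hv hu r E L)
      (fun u hmem => isLeibnitzTree hc hcoh hact hv hu r E u) (by simpa using hsub) s
  | t :: t' :: L, 0, p, hsub =>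
    simpa using act_cons_expand_of_subAtS hact (isLeibnitzTree hc hcoh hact hv hu r E [t])
      (fun u hmem => isLeibnitzTree hc hcoh hact hv hu r E u) (by simpa using hsub) s
  | [.mk d []], 0, [], hsub =>
    obtain ⟨rfl, rfl⟩ : d = r • E ∧ [] = Ti := by simpa using hsub
    simpa using act_mk_smul_nil hact hv s
  | [.mk d (cH :: cL)], 0, [], hsub =>
    obtain ⟨rfl, rfl⟩ : d = r • E ∧ cH :: cL = Ti := by simpa using hsub
    simpa using act_mk_smul_cons_expand hc hcoh hact hv hu
      (isLeibnitzTree hc hcoh hact hv hu r E _)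
      (fun u hmem => isLeibnitzTree hc hcoh hact hv hu r E [.mk (r • E) u]) s
  | [.mk d []], 0, _ :: _, hsub => simp at hsub
  | [.mk d (cH :: cL)], 0, 0 :: p, hsub =>
    simpa using act_mk_cons_expand_of_subAtS hc hcoh hact hv hu
      (isLeibnitzTree hc hcoh hact hv hu r E [cH])
      (fun u hmem => isLeibnitzTree hc hcoh hact hv hu r E [.mk d u]) (by simpa using hsub) s
  | [.mk d (cH :: cL)], 0, (j + 1) :: p, hsub =>
    simpa using act_mk_cons_expand_of_subAtL hc hcoh hact hv hu
      (isLeibnitzTree hc hcoh hact hv hu r E [.mk d cL])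
      (fun u hmem => isLeibnitzTree hc hcoh hact hv hu r E [.mk d u]) (by simpa using hsub) s
termination_by (sizeL T, T.length, rootArity T)
decreasing_by
  all_goals simp only [Prod.lex_def, rootArity, List.length_cons, List.length_nil, sizeL_cons,
    sizeL_nil, sizeS_mk, add_zero, zero_add, lt_self_iff_false, true_and, false_or]
  · have := sizeS_pos t; omega
  · have := sizeL_of_mem_attachL _ _ _ hmem; have := length_of_mem_attachL _ _ _ hmem; omega
  · have := sizeS_pos t'; omega
  · have hsize := sizeL_of_mem_attachL _ _ _ hmem
    have hlength := length_of_mem_attachL _ _ _ hmem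
    simp only [sizeL_cons, List.length_cons] at hsize hlength
    omega
  · have := sizeS_pos cH; omega
  · have := sizeL_of_mem_attachL _ _ _ hmem; have := length_of_mem_attachL _ _ _ hmem; omega
  · omega
  · have := sizeL_of_mem_attachL _ _ _ hmem; have := length_of_mem_attachL _ _ _ hmem; omega
  · have := sizeS_pos cH; omega
  · have := sizeL_of_mem_attachL _ _ _ hmem; have := length_of_mem_attachL _ _ _ hmem; omega

end Action

/-- **Theorem.** Let `R` be a commutative `k`-algebra and `∇` a connection on `Der(R)`.
The `kLT(Der R)`-module algebra structure on `R` determined by the rules of the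
construction — `v(E)` acts as `E`, `u(E; v(F))` acts as `∇_F E`, and (coherence) any
subtree whose root has one child and which acts as a derivation may be replaced by the
corresponding two-node tree — is Leibnitz. -/
theorem construction_action_is_leibnitz
    (k R : Type) [Field k] [CommRing R] [Algebra k R]
    (c : Derivation k R R → Derivation k R R → Derivation k R R)
    (hc : IsConnection k R c)
    (act : LTree (Derivation k R R) → R → R)
    (hact : IsTreeAction k R act)
    (hcoh : IsCoherent k R act)
    -- every subtree whose root has a single child acts as some derivation
    (hder : ∀ s : LSub (Derivation k R R), ∃ E : Derivation k R R, ∀ f, act [s] f = E f)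
    -- `v(E)` acts as `E`
    (hv : ∀ (E : Derivation k R R) (f : R), act (vT E) f = E f)
    -- `u(E; v(F))` acts as `∇_F E`
    (hu : ∀ (E F : Derivation k R R) (f : R), act (uT E [vT F]) f = (c F E) f) :
    IsLeibnitz k R act := by
  rintro T i p _ Ti hsub r E rfl s
  exact isLeibnitzTree hc hcoh hact hv hu r E T s i p Ti hsub
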